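/- If a scalar first-order ODE y' = f(t, y) has f real-analytic in a neighborhood of (t0, y0), then there exists a unique real-analytic solution y(t) in a neighborhood of t0 with y(t0) = y0 (a special case of the Cauchy–Kovalevskaya theorem). -/

import Mathlib

/-!
Expanding every coefficient of the power series of `f` at `(t₀, y₀)` in the standard basis of
`ℝ × ℝ` turns it into a holomorphic `g` near `(t₀, y₀) ∈ ℂ × ℂ` that agrees with `f` on real
points. On a small disc about `t₀`, the Picard operator `u ↦ y₀ + ∫_{t₀}^t g(s, u s) ds` preserves
the holomorphic functions with values near `y₀` that are real on the real axis, and contracts the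
uniform distance, so it has a fixed point there: a holomorphic solution of `y' = g(t, y)`, whose
restriction to the real axis is a real-analytic solution of `y' = f(t, y)`. Any two solutions agree
near `t₀` because `f` is locally Lipschitz, hence on the whole interval by the identity theorem.
-/

open Metric Set Filter Topology

noncomputable section

def ofRealProd (v : ℝ × ℝ) : ℂ × ℂ := (v.1, v.2)

@[simp] lemma norm_ofRealProd (v : ℝ × ℝ) : ‖ofRealProd v‖ = ‖v‖ := by
  simp [ofRealProd, Prod.norm_def]

lemma ofRealProd_sub (v w : ℝ × ℝ) : ofRealProd (v - w) = ofRealProd v - ofRealProd w := by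
  simp [ofRealProd]

lemma ofRealProd_mem_ball_iff {v x : ℝ × ℝ} {ρ : ℝ} :
    ofRealProd v ∈ ball (ofRealProd x) ρ ↔ v ∈ ball x ρ := by
  rw [mem_ball, mem_ball, dist_eq_norm, dist_eq_norm, ← ofRealProd_sub, norm_ofRealProd]

lemma ofReal_mem_ball_iff {x t₀ ε : ℝ} : (x : ℂ) ∈ ball (t₀ : ℂ) ε ↔ x ∈ ball t₀ ε := by
  simp only [mem_ball, Complex.isometry_ofReal.dist_eq]

def prodBasis (b : Bool) : ℝ × ℝ := cond b (0, 1) (1, 0)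

lemma norm_prodBasis (b : Bool) : ‖prodBasis b‖ = 1 := by
  cases b <;> simp [prodBasis]

lemma eq_sum_prodBasis (v : ℝ × ℝ) : v = ∑ b : Bool, cond b v.2 v.1 • prodBasis b := by
  simp [prodBasis]

def prodCoord (b : Bool) : ℂ × ℂ →L[ℂ] ℂ :=
  cond b (ContinuousLinearMap.snd ℂ ℂ ℂ) (ContinuousLinearMap.fst ℂ ℂ ℂ)

lemma norm_prodCoord_le (b : Bool) : ‖prodCoord b‖ ≤ 1 := by
  cases b
  exacts [ContinuousLinearMap.norm_fst_le ℂ ℂ ℂ, ContinuousLinearMap.norm_snd_le ℂ ℂ ℂ]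

lemma prodCoord_ofRealProd (b : Bool) (v : ℝ × ℝ) :
    prodCoord b (ofRealProd v) = (cond b v.2 v.1 : ℝ) := by
  cases b <;> rfl

namespace ContinuousMultilinearMap

variable {n : ℕ}

/-- The `ℂ`-multilinear form on `ℂ × ℂ` with the same values as `c` on tuples of basis vectors. -/
def complexifyProd (c : ContinuousMultilinearMap ℝ (fun _ : Fin n => ℝ × ℝ) ℝ) :
    ContinuousMultilinearMap ℂ (fun _ : Fin n => ℂ × ℂ) ℂ :=
  ∑ s : Fin n → Bool,
    (ContinuousMultilinearMap.mkPiRing ℂ (Fin n)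
      ((c fun i => prodBasis (s i) : ℝ) : ℂ)).compContinuousLinearMap fun i => prodCoord (s i)

lemma norm_complexifyProd_le (c : ContinuousMultilinearMap ℝ (fun _ : Fin n => ℝ × ℝ) ℝ) :
    ‖c.complexifyProd‖ ≤ 2 ^ n * ‖c‖ := by
  refine (norm_sum_le _ _).trans <| (Finset.sum_le_sum fun s _ => ?_).trans_eq
    (by simp : ∑ _s : Fin n → Bool, ‖c‖ = 2 ^ n * ‖c‖)
  have hbasis : ‖c fun i => prodBasis (s i)‖ ≤ ‖c‖ := by
    simpa [norm_prodBasis] using c.le_opNorm fun i => prodBasis (s i)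
  have hcoord : ∏ i, ‖prodCoord (s i)‖ ≤ 1 :=
    Finset.prod_le_one (fun _ _ => norm_nonneg _) fun i _ => norm_prodCoord_le (s i)
  calc _ ≤ ‖c fun i => prodBasis (s i)‖ * ∏ i, ‖prodCoord (s i)‖ :=
        (norm_compContinuousLinearMap_le _ _).trans_eq (by rw [norm_mkPiRing, Complex.norm_real])
    _ ≤ ‖c‖ * 1 := mul_le_mul hbasis hcoord (by positivity) (norm_nonneg _)
    _ = ‖c‖ := mul_one _

lemma complexifyProd_apply_ofRealProd (c : ContinuousMultilinearMap ℝ (fun _ : Fin n => ℝ × ℝ) ℝ)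
    (v : Fin n → ℝ × ℝ) : c.complexifyProd (fun i => ofRealProd (v i)) = c v := by
  have hexpand : c v = ∑ s : Fin n → Bool,
      (∏ i, cond (s i) (v i).2 (v i).1) * c fun i => prodBasis (s i) := by
    conv_lhs => rw [show v = fun i => ∑ b : Bool, cond b (v i).2 (v i).1 • prodBasis b from
      funext fun i => eq_sum_prodBasis (v i)]
    rw [c.map_sum]
    simp only [c.map_smul_univ, smul_eq_mul]
  simp [complexifyProd, prodCoord_ofRealProd, hexpand]

end ContinuousMultilinearMap

namespace FormalMultilinearSeries

def complexifyProd (p : FormalMultilinearSeries ℝ (ℝ × ℝ) ℝ) :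
    FormalMultilinearSeries ℂ (ℂ × ℂ) ℂ :=
  fun n => (p n).complexifyProd

variable (p : FormalMultilinearSeries ℝ (ℝ × ℝ) ℝ)

lemma half_le_radius_complexifyProd {r : NNReal} (hr : (r : ENNReal) < p.radius) :
    ((r / 2 : NNReal) : ENNReal) ≤ p.complexifyProd.radius := by
  obtain ⟨C, -, hC⟩ := p.norm_mul_pow_le_of_lt_radius hr
  refine p.complexifyProd.le_radius_of_bound C fun n => ?_
  calc ‖(p n).complexifyProd‖ * ((r / 2 : NNReal) : ℝ) ^ n
      ≤ 2 ^ n * ‖p n‖ * ((r : ℝ) / 2) ^ n := by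
        push_cast
        gcongr
        exact (p n).norm_complexifyProd_le
    _ = ‖p n‖ * (r : ℝ) ^ n := by rw [div_pow]; field_simp
    _ ≤ C := hC n

/-- No radius condition is needed: `tsum` commutes with `ℝ → ℂ`, both sides being `0` when the
series diverges. -/
lemma complexifyProd_sum_ofRealProd (w : ℝ × ℝ) :
    p.complexifyProd.sum (ofRealProd w) = p.sum w := by
  simp [FormalMultilinearSeries.sum, complexifyProd, Complex.ofReal_tsum,
    ← ContinuousMultilinearMap.complexifyProd_apply_ofRealProd]

end FormalMultilinearSeries

theorem AnalyticAt.exists_complexification {f : ℝ × ℝ → ℝ} {x : ℝ × ℝ} (hf : AnalyticAt ℝ f x) :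
    ∃ g : ℂ × ℂ → ℂ, ∃ ρ > 0, AnalyticOnNhd ℂ g (ball (ofRealProd x) ρ) ∧
      ∀ v ∈ ball x ρ, g (ofRealProd v) = f v := by
  obtain ⟨p, r, hp⟩ := hf
  obtain ⟨r', hr'0, hr'⟩ := ENNReal.lt_iff_exists_nnreal_btwn.mp hp.r_pos
  set ρ : NNReal := r' / 2
  have hρ : 0 < ρ := half_pos (ENNReal.coe_pos.mp hr'0)
  have hρr : (ρ : ENNReal) < r := (ENNReal.coe_le_coe.mpr (NNReal.half_le_self r')).trans_lt hr'
  have hrad : (ρ : ENNReal) ≤ p.complexifyProd.radius :=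
    p.half_le_radius_complexifyProd (hr'.trans_le hp.r_le)
  have hg : HasFPowerSeriesOnBall p.complexifyProd.sum p.complexifyProd 0 ρ :=
    (p.complexifyProd.hasFPowerSeriesOnBall ((ENNReal.coe_pos.mpr hρ).trans_le hrad)).mono
      (ENNReal.coe_pos.mpr hρ) hrad
  refine ⟨fun z => p.complexifyProd.sum (z - ofRealProd x), ρ, hρ, ?_, fun v hv => ?_⟩
  · simpa [Metric.eball_coe] using (hg.comp_sub (ofRealProd x)).analyticOnNhd
  · have hvx : v - x ∈ Metric.eball 0 r := by
      refine Metric.eball_subset_eball hρr.le ?_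
      rwa [Metric.eball_coe, mem_ball_zero_iff, ← dist_eq_norm]
    change p.complexifyProd.sum (ofRealProd v - ofRealProd x) = _
    rw [← ofRealProd_sub, p.complexifyProd_sum_ofRealProd, ← hp.sum hvx, add_sub_cancel]

lemma exists_tendstoUniformlyOn_of_dist_le_geometric {α β : Type*} [PseudoMetricSpace β]
    [CompleteSpace β] {B : Set α} {u : ℕ → α → β} {C q : ℝ} (hq₀ : 0 ≤ q) (hq : q < 1)
    (hu : ∀ n, ∀ t ∈ B, dist (u n t) (u (n + 1) t) ≤ C * q ^ n) :
    ∃ y : α → β, TendstoUniformlyOn u y atTop B ∧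
      ∀ n, ∀ t ∈ B, dist (u n t) (y t) ≤ C * q ^ n / (1 - q) := by
  have hlim (t : α) : ∃ b, t ∈ B → Tendsto (fun n => u n t) atTop (𝓝 b) := by
    by_cases ht : t ∈ B
    · obtain ⟨b, hb⟩ :=
        cauchySeq_tendsto_of_complete (cauchySeq_of_le_geometric q C hq fun n => hu n t ht)
      exact ⟨b, fun _ => hb⟩
    · exact ⟨u 0 t, fun h => absurd h ht⟩
  choose y hy using hlim
  have hdist (n : ℕ) (t : α) (ht : t ∈ B) : dist (u n t) (y t) ≤ C * q ^ n / (1 - q) :=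
    dist_le_of_le_geometric_of_tendsto q C hq (fun n => hu n t ht) (hy t ht) n
  refine ⟨y, ?_, hdist⟩
  have hbound : Tendsto (fun n => C * q ^ n / (1 - q)) atTop (𝓝 0) := by
    simpa using ((tendsto_pow_atTop_nhds_zero_of_lt_one hq₀ hq).const_mul C).div_const (1 - q)
  rw [Metric.tendstoUniformlyOn_iff]
  intro η hη
  filter_upwards [hbound.eventually (gt_mem_nhds hη)] with n hn t ht
  rw [dist_comm]
  exact (hdist n t ht).trans_lt hn

theorem exists_mem_eqOn_of_uniform_contraction {α β : Type*} [MetricSpace β] [CompleteSpace β]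
    {B : Set α} {S : Set (α → β)} {Φ : (α → β) → α → β} {q : ℝ} (hq₀ : 0 ≤ q) (hq : q < 1)
    (hΦS : MapsTo Φ S S)
    (hS : ∀ (u : ℕ → α → β) (y : α → β), (∀ n, u n ∈ S) → TendstoUniformlyOn u y atTop B → y ∈ S)
    (hΦ : ∀ u ∈ S, ∀ v ∈ S, ∀ δ, (∀ t ∈ B, dist (u t) (v t) ≤ δ) →
      ∀ t ∈ B, dist (Φ u t) (Φ v t) ≤ q * δ)
    {u₀ : α → β} (hu₀ : u₀ ∈ S) {C : ℝ} (hC : ∀ t ∈ B, dist (u₀ t) (Φ u₀ t) ≤ C) :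
    ∃ y ∈ S, EqOn (Φ y) y B := by
  set u : ℕ → α → β := fun n => Φ^[n] u₀
  have huS (n : ℕ) : u n ∈ S := hΦS.iterate n hu₀
  have hsucc (n : ℕ) : u (n + 1) = Φ (u n) := Function.iterate_succ_apply' Φ n u₀
  have hgeom (n : ℕ) : ∀ t ∈ B, dist (u n t) (u (n + 1) t) ≤ C * q ^ n := by
    induction n with
    | zero => simpa [u] using hC
    | succ n ih =>
      intro t ht
      calc dist (u (n + 1) t) (u (n + 1 + 1) t) = dist (Φ (u n) t) (Φ (u (n + 1)) t) := by
            rw [hsucc (n + 1), hsucc n]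
        _ ≤ q * (C * q ^ n) := hΦ _ (huS _) _ (huS _) _ ih t ht
        _ = C * q ^ (n + 1) := by ring
  obtain ⟨y, hy, hdist⟩ := exists_tendstoUniformlyOn_of_dist_le_geometric hq₀ hq hgeom
  have hyS : y ∈ S := hS u y huS hy
  refine ⟨y, hyS, fun t ht =>
    tendsto_nhds_unique ?_ ((hy.tendsto_at ht).comp (tendsto_add_atTop_nat 1))⟩
  have hlim : Tendsto (fun n => q * (C * q ^ n / (1 - q))) atTop (𝓝 0) := by
    simpa using (((tendsto_pow_atTop_nhds_zero_of_lt_one hq₀ hq).const_mul C).div_const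
      (1 - q)).const_mul q
  refine tendsto_iff_dist_tendsto_zero.mpr (squeeze_zero (fun _ => dist_nonneg) (fun n => ?_) hlim)
  rw [Function.comp_apply, hsucc]
  exact hΦ _ (huS n) _ hyS _ (hdist n) t ht

lemma norm_sub_center_le_of_hasDerivAt {𝕜 E : Type*} [RCLike 𝕜] [NormedAddCommGroup E]
    [NormedSpace 𝕜 E] {F F' : 𝕜 → E} {c t : 𝕜} {ε K : ℝ}
    (hF : ∀ s ∈ ball c ε, HasDerivAt F (F' s) s) (hK : ∀ s ∈ ball c ε, ‖F' s‖ ≤ K)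
    (ht : t ∈ ball c ε) : ‖F t - F c‖ ≤ K * ε := by
  have hK₀ : 0 ≤ K := (norm_nonneg _).trans (hK t ht)
  calc ‖F t - F c‖ ≤ K * ‖t - c‖ :=
        (convex_ball c ε).norm_image_sub_le_of_norm_hasDerivWithin_le
          (fun s hs => (hF s hs).hasDerivWithinAt) hK (mem_ball_self (pos_of_mem_ball ht)) ht
    _ ≤ K * ε := by gcongr; exact (mem_ball_iff_norm.mp ht).le

lemma prodMk_mem_closedBall_of_mapsTo {α β : Type*} [PseudoMetricSpace α] [PseudoMetricSpace β]
    {u : α → β} {t₀ t : α} {y₀ : β} {ε r : ℝ} (hεr : ε ≤ r)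
    (hu : MapsTo u (ball t₀ ε) (closedBall y₀ r)) (ht : t ∈ ball t₀ ε) :
    (t, u t) ∈ closedBall (t₀, y₀) r :=
  mem_closedBall.mpr (max_le ((mem_ball.mp ht).le.trans hεr) (hu ht))

/-- The Picard operator `u ↦ y₀ + ∫_{t₀}^t g(s, u s) ds`; the wedge integral is a primitive on every
disc about `t₀` on which its integrand is holomorphic. -/
def picardWedge (g : ℂ × ℂ → ℂ) (t₀ y₀ : ℂ) (u : ℂ → ℂ) (t : ℂ) : ℂ :=
  y₀ + Complex.wedgeIntegral t₀ t fun s => g (s, u s)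

def picardSet (t₀ y₀ ε r : ℝ) : Set (ℂ → ℂ) :=
  {u | DifferentiableOn ℂ u (ball (t₀ : ℂ) ε) ∧ MapsTo u (ball (t₀ : ℂ) ε) (closedBall (y₀ : ℂ) r) ∧
    ∀ x ∈ ball t₀ ε, (u x).im = 0}

section Picard

variable {g : ℂ × ℂ → ℂ} {u v : ℂ → ℂ}

@[simp] lemma picardWedge_self (t₀ y₀ : ℂ) : picardWedge g t₀ y₀ u t₀ = y₀ := by
  simp [picardWedge, Complex.wedgeIntegral]

lemma hasDerivAt_picardWedge {t₀ y₀ t : ℂ} {ε : ℝ}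
    (hu : DifferentiableOn ℂ (fun s => g (s, u s)) (ball t₀ ε)) (ht : t ∈ ball t₀ ε) :
    HasDerivAt (picardWedge g t₀ y₀ u) (g (t, u t)) t :=
  (hu.isConservativeOn.hasDerivAt_wedgeIntegral hu.continuousOn ht).const_add y₀

/-- Between real endpoints the wedge integral is an ordinary integral along `ℝ`. -/
lemma im_picardWedge_ofReal {t₀ y₀ x : ℝ} (hu : ∀ s ∈ uIcc t₀ x, (g (s, u s)).im = 0) :
    (picardWedge g t₀ y₀ u x).im = 0 := by
  have hreal : ∫ s in t₀..x, g (s, u s) = ((∫ s in t₀..x, (g (s, u s)).re : ℝ) : ℂ) := by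
    rw [← intervalIntegral.integral_ofReal]
    exact intervalIntegral.integral_congr fun s hs => Complex.ext rfl (by simpa using hu s hs)
  simp [picardWedge, Complex.wedgeIntegral, hreal]

variable {t₀ y₀ ε r : ℝ}

lemma hasDerivAt_picardWedge_of_mem_picardSet
    (hgd : DifferentiableOn ℂ g (closedBall ((t₀ : ℂ), (y₀ : ℂ)) r)) (hεr : ε ≤ r)
    (hu : u ∈ picardSet t₀ y₀ ε r) {t : ℂ} (ht : t ∈ ball (t₀ : ℂ) ε) :
    HasDerivAt (picardWedge g t₀ y₀ u) (g (t, u t)) t := by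
  refine hasDerivAt_picardWedge (fun s hs => ?_) ht
  exact (hgd _ (prodMk_mem_closedBall_of_mapsTo hεr hu.2.1 hs)).comp s
    (differentiableWithinAt_id.prodMk (hu.1 s hs))
    fun _ ht => prodMk_mem_closedBall_of_mapsTo hεr hu.2.1 ht

lemma picardWedge_mem_picardSet {M : ℝ}
    (hgd : DifferentiableOn ℂ g (closedBall ((t₀ : ℂ), (y₀ : ℂ)) r))
    (hgM : ∀ z ∈ closedBall ((t₀ : ℂ), (y₀ : ℂ)) r, ‖g z‖ ≤ M)
    (hgreal : ∀ t w : ℝ, ((t : ℂ), (w : ℂ)) ∈ closedBall ((t₀ : ℂ), (y₀ : ℂ)) r → (g (t, w)).im = 0)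
    (hεr : ε ≤ r) (hMε : M * ε ≤ r) (hu : u ∈ picardSet t₀ y₀ ε r) :
    picardWedge g t₀ y₀ u ∈ picardSet t₀ y₀ ε r := by
  have hderiv (t : ℂ) (ht : t ∈ ball (t₀ : ℂ) ε) :=
    hasDerivAt_picardWedge_of_mem_picardSet hgd hεr hu ht
  refine ⟨fun t ht => (hderiv t ht).differentiableAt.differentiableWithinAt, fun t ht => ?_,
    fun x hx => im_picardWedge_ofReal fun s hs => ?_⟩
  · have := norm_sub_center_le_of_hasDerivAt hderiv
      (fun s hs => hgM _ (prodMk_mem_closedBall_of_mapsTo hεr hu.2.1 hs)) ht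
    rw [picardWedge_self] at this
    exact mem_closedBall_iff_norm.mpr (this.trans hMε)
  · have hsB : (s : ℂ) ∈ ball (t₀ : ℂ) ε := ofReal_mem_ball_iff.mpr
      ((convex_ball t₀ ε).ordConnected.uIcc_subset (mem_ball_self (pos_of_mem_ball hx)) hx hs)
    have hus : u s = ((u s).re : ℂ) :=
      Complex.ext rfl (by simpa using hu.2.2 s (ofReal_mem_ball_iff.mp hsB))
    rw [hus]
    exact hgreal _ _ (hus ▸ prodMk_mem_closedBall_of_mapsTo hεr hu.2.1 hsB)

lemma mem_picardSet_of_tendstoUniformlyOn {U : ℕ → ℂ → ℂ} (hU : ∀ n, U n ∈ picardSet t₀ y₀ ε r)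
    (hUu : TendstoUniformlyOn U u atTop (ball (t₀ : ℂ) ε)) : u ∈ picardSet t₀ y₀ ε r := by
  have hlim {t : ℂ} (ht : t ∈ ball (t₀ : ℂ) ε) := hUu.tendsto_at ht
  refine ⟨hUu.tendstoLocallyUniformlyOn.differentiableOn (Eventually.of_forall fun n => (hU n).1)
    isOpen_ball, fun t ht => ?_, fun x hx => ?_⟩
  · exact isClosed_closedBall.mem_of_tendsto (hlim ht) (Eventually.of_forall fun n => (hU n).2.1 ht)
  · exact (isClosed_eq Complex.continuous_im continuous_const).mem_of_tendsto
      (hlim (ofReal_mem_ball_iff.mpr hx)) (Eventually.of_forall fun n => (hU n).2.2 x hx)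

lemma dist_picardWedge_le {L : NNReal} {δ : ℝ}
    (hgd : DifferentiableOn ℂ g (closedBall ((t₀ : ℂ), (y₀ : ℂ)) r))
    (hgL : LipschitzOnWith L g (closedBall ((t₀ : ℂ), (y₀ : ℂ)) r)) (hεr : ε ≤ r)
    (hu : u ∈ picardSet t₀ y₀ ε r) (hv : v ∈ picardSet t₀ y₀ ε r)
    (huv : ∀ t ∈ ball (t₀ : ℂ) ε, dist (u t) (v t) ≤ δ) {t : ℂ} (ht : t ∈ ball (t₀ : ℂ) ε) :
    dist (picardWedge g t₀ y₀ u t) (picardWedge g t₀ y₀ v t) ≤ L * ε * δ := by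
  have hderiv (s : ℂ) (hs : s ∈ ball (t₀ : ℂ) ε) :=
    (hasDerivAt_picardWedge_of_mem_picardSet hgd hεr hu hs).sub
      (hasDerivAt_picardWedge_of_mem_picardSet hgd hεr hv hs)
  have hbound (s : ℂ) (hs : s ∈ ball (t₀ : ℂ) ε) : ‖g (s, u s) - g (s, v s)‖ ≤ L * δ := by
    calc ‖g (s, u s) - g (s, v s)‖ ≤ L * dist (s, u s) (s, v s) := by
          rw [← dist_eq_norm]
          exact hgL.dist_le_mul _ (prodMk_mem_closedBall_of_mapsTo hεr hu.2.1 hs) _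
            (prodMk_mem_closedBall_of_mapsTo hεr hv.2.1 hs)
      _ ≤ L * δ := by
          gcongr
          simpa [Prod.dist_eq] using huv s hs
  have := norm_sub_center_le_of_hasDerivAt hderiv hbound ht
  rw [Pi.sub_apply, Pi.sub_apply, picardWedge_self, picardWedge_self, sub_self, sub_zero,
    ← dist_eq_norm] at this
  linarith

theorem exists_mem_picardSet_hasDerivAt {M : ℝ} {L : NNReal}
    (hgd : DifferentiableOn ℂ g (closedBall ((t₀ : ℂ), (y₀ : ℂ)) r))
    (hgM : ∀ z ∈ closedBall ((t₀ : ℂ), (y₀ : ℂ)) r, ‖g z‖ ≤ M)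
    (hgL : LipschitzOnWith L g (closedBall ((t₀ : ℂ), (y₀ : ℂ)) r))
    (hgreal : ∀ t w : ℝ, ((t : ℂ), (w : ℂ)) ∈ closedBall ((t₀ : ℂ), (y₀ : ℂ)) r → (g (t, w)).im = 0)
    (hε : 0 < ε) (hεr : ε ≤ r) (hMε : M * ε ≤ r) (hLε : L * ε < 1) :
    ∃ y ∈ picardSet t₀ y₀ ε r, y t₀ = y₀ ∧ ∀ t ∈ ball (t₀ : ℂ) ε, HasDerivAt y (g (t, y t)) t := by
  have hmaps : MapsTo (picardWedge g t₀ y₀) (picardSet t₀ y₀ ε r) (picardSet t₀ y₀ ε r) :=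
    fun u hu => picardWedge_mem_picardSet hgd hgM hgreal hεr hMε hu
  have hconst : (fun _ => (y₀ : ℂ)) ∈ picardSet t₀ y₀ ε r :=
    ⟨differentiableOn_const _, fun _ _ => mem_closedBall_self (hε.le.trans hεr), fun _ _ => rfl⟩
  obtain ⟨y, hyS, hfix⟩ := exists_mem_eqOn_of_uniform_contraction (by positivity) hLε hmaps
    (fun _ _ hU hUu => mem_picardSet_of_tendstoUniformlyOn hU hUu)
    (fun _ hu _ hv _ huv _ ht => dist_picardWedge_le hgd hgL hεr hu hv huv ht) hconst
    (C := r) fun t ht => dist_comm (y₀ : ℂ) _ ▸ (hmaps hconst).2.1 ht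
  refine ⟨y, hyS, ?_, fun t ht => ?_⟩
  · rw [← hfix (mem_ball_self hε), picardWedge_self]
  · exact (hasDerivAt_picardWedge_of_mem_picardSet hgd hεr hyS ht).congr_of_eventuallyEq
      (eventually_of_mem (isOpen_ball.mem_nhds ht) fun s hs => (hfix hs).symm)

end Picard

lemma exists_pos_le_mul_le_mul_lt_one {r M L : ℝ} (hr : 0 < r) (hM : 0 ≤ M) (hL : 0 ≤ L) :
    ∃ ε > 0, ε ≤ r ∧ M * ε ≤ r ∧ L * ε < 1 := by
  refine ⟨min (r / (M + 1)) (1 / (L + 1)), by positivity,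
    (min_le_left _ _).trans (div_le_self hr.le (by linarith)), ?_, ?_⟩
  · calc M * min (r / (M + 1)) (1 / (L + 1)) ≤ M * (r / (M + 1)) := by gcongr; exact min_le_left _ _
      _ ≤ r := by rw [mul_div_assoc', div_le_iff₀ (by positivity)]; nlinarith
  · calc L * min (r / (M + 1)) (1 / (L + 1)) ≤ L * (1 / (L + 1)) := by
          gcongr; exact min_le_right _ _
      _ < 1 := by rw [mul_one_div, div_lt_one (by positivity)]; linarith

theorem AnalyticOnNhd.exists_differentiableOn_hasDerivAt_of_im_eq_zero {g : ℂ × ℂ → ℂ}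
    {t₀ y₀ ρ : ℝ} (hg : AnalyticOnNhd ℂ g (ball ((t₀ : ℂ), (y₀ : ℂ)) ρ)) (hρ : 0 < ρ)
    (hgreal : ∀ t w : ℝ, ((t : ℂ), (w : ℂ)) ∈ ball ((t₀ : ℂ), (y₀ : ℂ)) ρ → (g (t, w)).im = 0) :
    ∃ ε > 0, ∃ y : ℂ → ℂ, DifferentiableOn ℂ y (ball (t₀ : ℂ) ε) ∧ (∀ x ∈ ball t₀ ε, (y x).im = 0) ∧
      y t₀ = y₀ ∧ ∀ t ∈ ball (t₀ : ℂ) ε,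
        (t, y t) ∈ ball ((t₀ : ℂ), (y₀ : ℂ)) ρ ∧ HasDerivAt y (g (t, y t)) t := by
  set p : ℂ × ℂ := ((t₀ : ℂ), (y₀ : ℂ))
  have hgp : AnalyticAt ℂ g p := hg p (mem_ball_self hρ)
  obtain ⟨L, U, hU, hgL⟩ := (hgp.contDiffAt (n := 1)).exists_lipschitzOnWith
  have hgM : ∀ᶠ z in 𝓝 p, ‖g z‖ ≤ ‖g p‖ + 1 :=
    hgp.continuousAt.norm.eventually (Iic_mem_nhds (lt_add_one _))
  obtain ⟨r, hr, hrsub⟩ :=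
    nhds_basis_closedBall.mem_iff.mp (inter_mem (inter_mem hU hgM) (ball_mem_nhds p hρ))
  obtain ⟨ε, hε, hεr, hMε, hLε⟩ := exists_pos_le_mul_le_mul_lt_one (M := ‖g p‖ + 1) hr
    (by positivity) L.coe_nonneg
  obtain ⟨y, hyS, hy₀, hy'⟩ := exists_mem_picardSet_hasDerivAt
    (fun z hz => (hg z (hrsub hz).2).differentiableAt.differentiableWithinAt)
    (fun z hz => (hrsub hz).1.2) (hgL.mono fun z hz => (hrsub hz).1.1)
    (fun t w h => hgreal t w (hrsub h).2) hε hεr hMε hLε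
  exact ⟨ε, hε, y, hyS.1, hyS.2.2, hy₀, fun t ht =>
    ⟨(hrsub (prodMk_mem_closedBall_of_mapsTo hεr hyS.2.1 ht)).2, hy' t ht⟩⟩

lemma AnalyticOnNhd.re_comp_ofReal {y : ℂ → ℂ} {U : Set ℂ} {s : Set ℝ} (hy : AnalyticOnNhd ℂ y U)
    (hs : MapsTo ((↑) : ℝ → ℂ) s U) : AnalyticOnNhd ℝ (fun x : ℝ => (y x).re) s :=
  fun x hx => Complex.reCLM.analyticAt _ |>.comp
    ((hy _ (hs hx)).restrictScalars.comp (Complex.ofRealCLM.analyticAt x))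

theorem AnalyticAt.exists_analyticOnNhd_hasDerivAt {f : ℝ × ℝ → ℝ} {t₀ y₀ : ℝ}
    (hf : AnalyticAt ℝ f (t₀, y₀)) :
    ∃ ε > 0, ∃ y : ℝ → ℝ, AnalyticOnNhd ℝ y (ball t₀ ε) ∧ y t₀ = y₀ ∧
      ∀ t ∈ ball t₀ ε, HasDerivAt y (f (t, y t)) t := by
  obtain ⟨g, ρ, hρ, hg, hgf⟩ := hf.exists_complexification
  have hgreal (t w : ℝ) (h : ((t : ℂ), (w : ℂ)) ∈ ball (ofRealProd (t₀, y₀)) ρ) :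
      (g (t, w)).im = 0 := by
    change (g (ofRealProd (t, w))).im = 0
    rw [hgf (t, w) (ofRealProd_mem_ball_iff.mp h), Complex.ofReal_im]
  obtain ⟨ε, hε, y, hyd, hyreal, hy₀, hy'⟩ :=
    hg.exists_differentiableOn_hasDerivAt_of_im_eq_zero hρ hgreal
  refine ⟨ε, hε, fun x => (y x).re, (hyd.analyticOnNhd isOpen_ball).re_comp_ofReal
    fun x hx => ofReal_mem_ball_iff.mpr hx, by simp [hy₀], fun x hx => ?_⟩
  obtain ⟨hmem, hder⟩ := hy' x (ofReal_mem_ball_iff.mpr hx)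
  have hyx : y x = ((y x).re : ℂ) := Complex.ext rfl (by simpa using hyreal x hx)
  rw [hyx, show ((x : ℂ), ((y x).re : ℂ)) = ofRealProd (x, (y x).re) from rfl] at hmem hder
  simpa [hgf _ (ofRealProd_mem_ball_iff.mp hmem)] using hder.real_of_complex

theorem ODE_solution_eventuallyEq_of_contDiffAt {E : Type*} [NormedAddCommGroup E]
    [NormedSpace ℝ E] {f : ℝ × E → E} {t₀ : ℝ} {y₀ : E} (hf : ContDiffAt ℝ 1 f (t₀, y₀))
    {y z : ℝ → E} (hy : ∀ᶠ t in 𝓝 t₀, HasDerivAt y (f (t, y t)) t)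
    (hz : ∀ᶠ t in 𝓝 t₀, HasDerivAt z (f (t, z t)) t) (hy₀ : y t₀ = y₀) (hz₀ : z t₀ = y₀) :
    y =ᶠ[𝓝 t₀] z := by
  obtain ⟨K, U, hU, hK⟩ := hf.exists_lipschitzOnWith
  obtain ⟨δ, hδ, hδU⟩ := Metric.mem_nhds_iff.mp hU
  have hlip : ∀ᶠ t in 𝓝 t₀, LipschitzOnWith K (fun w => f (t, w)) (ball y₀ δ) := by
    filter_upwards [ball_mem_nhds t₀ hδ] with t ht
    have := (hK.mono hδU).comp (LipschitzWith.prodMk_left t).lipschitzOnWith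
      fun w hw => (ball_prod_same t₀ y₀ δ ▸ mk_mem_prod ht hw : (t, w) ∈ ball (t₀, y₀) δ)
    rwa [mul_one] at this
  have hsol {x : ℝ → E} (hx : ∀ᶠ t in 𝓝 t₀, HasDerivAt x (f (t, x t)) t) (hx₀ : x t₀ = y₀) :
      ∀ᶠ t in 𝓝 t₀, HasDerivAt x (f (t, x t)) t ∧ x t ∈ ball y₀ δ :=
    hx.and (hx.self_of_nhds.continuousAt.eventually_mem (hx₀ ▸ ball_mem_nhds _ hδ))
  exact ODE_solution_unique_of_eventually hlip (hsol hy hy₀) (hsol hz hz₀) (hy₀.trans hz₀.symm)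

end

/-- Cauchy–Kovalevskaya theorem, scalar first-order case: if `f` is real-analytic
near `(t0, y0)`, then the ODE `y' = f (t, y t)`, `y t0 = y0` has a unique
real-analytic local solution. -/
theorem cauchy_kovalevskaya_scalar (f : ℝ × ℝ → ℝ) (t0 y0 : ℝ)
    (hf : AnalyticAt ℝ f (t0, y0)) :
    ∃ ε > 0, ∃ y : ℝ → ℝ,
      (AnalyticOnNhd ℝ y (ball t0 ε)) ∧ y t0 = y0 ∧
      (∀ t ∈ ball t0 ε, HasDerivAt y (f (t, y t)) t) ∧
      ∀ z : ℝ → ℝ,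
        AnalyticOnNhd ℝ z (ball t0 ε) → z t0 = y0 →
        (∀ t ∈ ball t0 ε, HasDerivAt z (f (t, z t)) t) →
        ∀ t ∈ ball t0 ε, z t = y t := by
  obtain ⟨ε, hε, y, hy, hy₀, hy'⟩ := hf.exists_analyticOnNhd_hasDerivAt
  refine ⟨ε, hε, y, hy, hy₀, hy', fun z hz hz₀ hz' => ?_⟩
  have hball : ∀ᶠ t in 𝓝 t0, t ∈ ball t0 ε := isOpen_ball.mem_nhds (mem_ball_self hε)
  have hloc : z =ᶠ[𝓝 t0] y := ODE_solution_eventuallyEq_of_contDiffAt hf.contDiffAt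
    (hball.mono hz') (hball.mono hy') hz₀ hy₀
  exact hz.eqOn_of_preconnected_of_eventuallyEq hy (convex_ball t0 ε).isPreconnected
    (mem_ball_self hε) hloc
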